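/- arXiv:1907.04906 — 3 statements merged into one kernel-verified Lean document; each statement's English description precedes it below -/
import Mathlib

section
/- If the conflict graph of a graph G contains an induced claw, then G contains a cycle of length 3 or 4. -/
namespace AD2PD

variable {V : Type*} [DecidableEq V]

/-- The vertex set of a set of edges. -/
def pathVerts (P : Finset (Sym2 V)) : Set V := {v | ∃ e ∈ P, v ∈ e}

/-- `P` is a path of length 2: two edges `{a,b}`, `{b,c}` with `a`, `b`, `c` distinct. -/
def IsTwoPath (P : Finset (Sym2 V)) : Prop :=
  ∃ a b c : V, a ≠ b ∧ b ≠ c ∧ a ≠ c ∧ P = {s(a, b), s(b, c)}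

/-- Two 2-paths are in conflict if their vertex sets share at least two vertices. -/
def Conflict (P Q : Finset (Sym2 V)) : Prop :=
  ∃ u v : V, u ≠ v ∧ u ∈ pathVerts P ∧ u ∈ pathVerts Q ∧ v ∈ pathVerts P ∧ v ∈ pathVerts Q

/-- An almost-disjoint 2-path decomposition of the graph `G`: a partition of the edge set
into 2-paths, no two of which are in conflict. -/
def IsAD2PD (G : SimpleGraph V) (X : Set (Finset (Sym2 V))) : Prop :=
  (∀ P ∈ X, IsTwoPath P) ∧
  (∀ e : Sym2 V, e ∈ G.edgeSet ↔ ∃ P ∈ X, e ∈ P) ∧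
  (∀ P ∈ X, ∀ Q ∈ X, P ≠ Q → ∀ e ∈ P, e ∉ Q) ∧
  (∀ P ∈ X, ∀ Q ∈ X, P ≠ Q → ¬ Conflict P Q)

section Aux

set_option linter.unusedSectionVars false

lemma triangleCycle {G : SimpleGraph V} {a b c : V} (hab : G.Adj a b) (hbc : G.Adj b c)
    (hca : G.Adj c a) :
    ∃ (v : V) (w : G.Walk v v), w.IsCycle ∧ (w.length = 3 ∨ w.length = 4) := by
  refine ⟨a, .cons hab (.cons hbc (.cons hca .nil)), ?_, Or.inl rfl⟩
  have h1 := hab.ne; have h2 := hbc.ne; have h3 := hca.ne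
  simp [SimpleGraph.Walk.isCycle_def, SimpleGraph.Walk.isTrail_def, List.Nodup,
    Sym2.eq, Sym2.rel_iff']
  aesop

lemma squareCycle {G : SimpleGraph V} {a b c d : V} (hab : G.Adj a b) (hbc : G.Adj b c)
    (hcd : G.Adj c d) (hda : G.Adj d a) (hac : a ≠ c) (hbd : b ≠ d) :
    ∃ (v : V) (w : G.Walk v v), w.IsCycle ∧ (w.length = 3 ∨ w.length = 4) := by
  refine ⟨a, .cons hab (.cons hbc (.cons hcd (.cons hda .nil))), ?_, Or.inr rfl⟩
  have h1 := hab.ne; have h2 := hbc.ne; have h3 := hcd.ne; have h4 := hda.ne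
  simp [SimpleGraph.Walk.isCycle_def, SimpleGraph.Walk.isTrail_def, List.Nodup,
    Sym2.eq, Sym2.rel_iff']
  aesop

lemma pathVerts_eq {a b c : V} : pathVerts ({s(a,b), s(b,c)} : Finset (Sym2 V)) = {a, b, c} := by
  ext v
  simp [pathVerts, Sym2.mem_iff]
  tauto

lemma conflict_pairs {a b c : V} {T : Finset (Sym2 V)}
    (h : Conflict ({s(a,b), s(b,c)} : Finset (Sym2 V)) T) :
    (a ∈ pathVerts T ∧ b ∈ pathVerts T) ∨ (a ∈ pathVerts T ∧ c ∈ pathVerts T) ∨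
    (b ∈ pathVerts T ∧ c ∈ pathVerts T) := by
  obtain ⟨u, v, huv, huP, huT, hvP, hvT⟩ := h
  rw [pathVerts_eq] at huP hvP
  simp only [Set.mem_insert_iff, Set.mem_singleton_iff] at huP hvP
  rcases huP with rfl|rfl|rfl <;> rcases hvP with rfl|rfl|rfl <;> tauto

/-- The key geometric step: if `T` is a 2-path of `G` containing `a` and `c` but not `b`,
and `a-b`, `b-c` are edges of `G`, then `G` has a 3- or 4-cycle. -/
lemma key {G : SimpleGraph V} {a b c : V} (hab : G.Adj a b) (hbc : G.Adj b c) (hac : a ≠ c)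
    (T : Finset (Sym2 V)) (hT : IsTwoPath T) (hTA : (T : Set (Sym2 V)) ⊆ G.edgeSet)
    (haT : a ∈ pathVerts T) (hcT : c ∈ pathVerts T) (hbT : b ∉ pathVerts T) :
    ∃ (v : V) (w : G.Walk v v), w.IsCycle ∧ (w.length = 3 ∨ w.length = 4) := by
  obtain ⟨x, y, z, hxy, hyz, hxz, rfl⟩ := hT
  rw [pathVerts_eq] at haT hcT hbT
  have hm1 : s(x,y) ∈ ({s(x,y), s(y,z)} : Finset (Sym2 V)) := by simp
  have hm2 : s(y,z) ∈ ({s(x,y), s(y,z)} : Finset (Sym2 V)) := by simp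
  have hxyG : G.Adj x y := hTA hm1
  have hyzG : G.Adj y z := hTA hm2
  simp only [Set.mem_insert_iff, Set.mem_singleton_iff] at haT hcT hbT
  push_neg at hbT
  rcases haT with rfl | rfl | rfl <;> rcases hcT with rfl | rfl | rfl
  · exact absurd rfl hac
  · exact triangleCycle hab hbc (hxyG.symm)
  · exact squareCycle hab hbc hyzG.symm hxyG.symm hac hbT.2.1
  · exact triangleCycle hab hbc hxyG
  · exact absurd rfl hac
  · exact triangleCycle hab hbc hyzG.symm
  · exact squareCycle hab hbc hxyG hyzG hac hbT.2.1
  · exact triangleCycle hab hbc hyzG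
  · exact absurd rfl hac

/-- Purely propositional selection lemma: among three paths each meeting `{a,b,c}` in
two vertices, pairwise sharing at most one vertex, one contains `a` and `c` but not `b`. -/
lemma sel {Aq Bq Cq Ar Br Cr As Bs Cs : Prop}
    (DQ : (Aq ∧ Bq) ∨ (Aq ∧ Cq) ∨ (Bq ∧ Cq))
    (DR : (Ar ∧ Br) ∨ (Ar ∧ Cr) ∨ (Br ∧ Cr))
    (DS : (As ∧ Bs) ∨ (As ∧ Cs) ∨ (Bs ∧ Cs))
    (e1 : Aq → Ar → Bq → Br → False) (e2 : Aq → Ar → Cq → Cr → False)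
    (e3 : Bq → Br → Cq → Cr → False)
    (e4 : Aq → As → Bq → Bs → False) (e5 : Aq → As → Cq → Cs → False)
    (e6 : Bq → Bs → Cq → Cs → False)
    (e7 : Ar → As → Br → Bs → False) (e8 : Ar → As → Cr → Cs → False)
    (e9 : Br → Bs → Cr → Cs → False) :
    (Aq ∧ Cq ∧ ¬Bq) ∨ (Ar ∧ Cr ∧ ¬Br) ∨ (As ∧ Cs ∧ ¬Bs) := by
  rcases DQ with ⟨h1,h2⟩|⟨h1,h2⟩|⟨h1,h2⟩ <;>
    rcases DR with ⟨h3,h4⟩|⟨h3,h4⟩|⟨h3,h4⟩ <;>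
    rcases DS with ⟨h5,h6⟩|⟨h5,h6⟩|⟨h5,h6⟩
  · exact (e1 h1 h3 h2 h4).elim
  · exact (e1 h1 h3 h2 h4).elim
  · exact (e1 h1 h3 h2 h4).elim
  · exact (e4 h1 h5 h2 h6).elim
  · exact (e8 h3 h5 h4 h6).elim
  · exact Or.inr (Or.inl ⟨h3, h4, fun hb => e1 h1 h3 h2 hb⟩)
  · exact (e4 h1 h5 h2 h6).elim
  · exact Or.inr (Or.inr ⟨h5, h6, fun hb => e4 h1 h5 h2 hb⟩)
  · exact (e9 h3 h5 h4 h6).elim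
  · exact (e7 h3 h5 h4 h6).elim
  · exact (e5 h1 h5 h2 h6).elim
  · exact Or.inl ⟨h1, h2, fun hb => e1 h1 h3 hb h4⟩
  · exact (e2 h1 h3 h2 h4).elim
  · exact (e2 h1 h3 h2 h4).elim
  · exact (e2 h1 h3 h2 h4).elim
  · exact Or.inl ⟨h1, h2, fun hb => e3 hb h3 h2 h4⟩
  · exact (e5 h1 h5 h2 h6).elim
  · exact (e9 h3 h5 h4 h6).elim
  · exact (e7 h3 h5 h4 h6).elim
  · exact Or.inr (Or.inr ⟨h5, h6, fun hb => e7 h3 h5 h4 hb⟩)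
  · exact (e6 h1 h5 h2 h6).elim
  · exact Or.inr (Or.inl ⟨h3, h4, fun hb => e7 h3 h5 hb h6⟩)
  · exact (e8 h3 h5 h4 h6).elim
  · exact (e6 h1 h5 h2 h6).elim
  · exact (e3 h1 h3 h2 h4).elim
  · exact (e3 h1 h3 h2 h4).elim
  · exact (e3 h1 h3 h2 h4).elim

end Aux

/-- If the conflict graph of `G` contains an induced claw, then `G` contains a cycle of
length 3 or 4. -/
theorem stmt10 (G : SimpleGraph V) (P Q R S : Finset (Sym2 V))
    (hP : IsTwoPath P) (hPA : (P : Set (Sym2 V)) ⊆ G.edgeSet)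
    (hQ : IsTwoPath Q) (hQA : (Q : Set (Sym2 V)) ⊆ G.edgeSet)
    (hR : IsTwoPath R) (hRA : (R : Set (Sym2 V)) ⊆ G.edgeSet)
    (hS : IsTwoPath S) (hSA : (S : Set (Sym2 V)) ⊆ G.edgeSet)
    (hPQ : P ≠ Q) (hPR : P ≠ R) (hPS : P ≠ S)
    (hQR : Q ≠ R) (hQS : Q ≠ S) (hRS : R ≠ S)
    (cPQ : Conflict P Q) (cPR : Conflict P R) (cPS : Conflict P S)
    (nQR : ¬ Conflict Q R) (nQS : ¬ Conflict Q S) (nRS : ¬ Conflict R S) :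
    ∃ (v : V) (w : G.Walk v v), w.IsCycle ∧ (w.length = 3 ∨ w.length = 4) := by
  obtain ⟨a, b, c, hab', hbc', hac, rfl⟩ := hP
  have hm1 : s(a,b) ∈ ({s(a,b), s(b,c)} : Finset (Sym2 V)) := by simp
  have hm2 : s(b,c) ∈ ({s(a,b), s(b,c)} : Finset (Sym2 V)) := by simp
  have hab : G.Adj a b := hPA hm1
  have hbc : G.Adj b c := hPA hm2
  have DQ := conflict_pairs cPQ
  have DR := conflict_pairs cPR
  have DS := conflict_pairs cPS
  have eQR : ∀ u v : V, u ≠ v → u ∈ pathVerts Q → u ∈ pathVerts R → v ∈ pathVerts Q →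
      v ∈ pathVerts R → False := fun u v h h1 h2 h3 h4 => nQR ⟨u, v, h, h1, h2, h3, h4⟩
  have eQS : ∀ u v : V, u ≠ v → u ∈ pathVerts Q → u ∈ pathVerts S → v ∈ pathVerts Q →
      v ∈ pathVerts S → False := fun u v h h1 h2 h3 h4 => nQS ⟨u, v, h, h1, h2, h3, h4⟩
  have eRS : ∀ u v : V, u ≠ v → u ∈ pathVerts R → u ∈ pathVerts S → v ∈ pathVerts R →
      v ∈ pathVerts S → False := fun u v h h1 h2 h3 h4 => nRS ⟨u, v, h, h1, h2, h3, h4⟩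
  have H := sel DQ DR DS (eQR a b hab') (eQR a c hac) (eQR b c hbc')
    (eQS a b hab') (eQS a c hac) (eQS b c hbc')
    (eRS a b hab') (eRS a c hac) (eRS b c hbc')
  rcases H with ⟨h1, h2, h3⟩ | ⟨h1, h2, h3⟩ | ⟨h1, h2, h3⟩
  · exact key hab hbc hac Q hQ hQA h1 h2 h3
  · exact key hab hbc hac R hR hRA h1 h2 h3
  · exact key hab hbc hac S hS hSA h1 h2 h3

end AD2PD
end

section
/- Let D be a simple digraph obtained by parallel composition of simple SP-digraphs D1 and D2 (with common source s and sink t after identification). If (a,b,c) is a D-feasible configuration, then there exist D1-feasible and D2-feasible configurations (a1,b1,c1) and (a2,b2,c2) with a = a1+a2, b = b1+b2, c = max(c1,c2), and c1 = 0 or c2 = 0. -/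
namespace Digraph

variable {V : Type*} [DecidableEq V]

/-- The vertex set of a set of arcs. -/
def dpVerts (P : Finset (V × V)) : Set V := {v | ∃ p ∈ P, v = p.1 ∨ v = p.2}

/-- `P` is a directed path of length 2: arcs `(a,b)`, `(b,c)` with `a`, `b`, `c` distinct. -/
def IsDTwoPath (P : Finset (V × V)) : Prop :=
  ∃ a b c : V, a ≠ b ∧ b ≠ c ∧ a ≠ c ∧ P = {(a, b), (b, c)}

/-- Two directed 2-paths are in conflict if their vertex sets share at least two vertices. -/
def DConflict (P Q : Finset (V × V)) : Prop :=
  ∃ u v : V, u ≠ v ∧ u ∈ dpVerts P ∧ u ∈ dpVerts Q ∧ v ∈ dpVerts P ∧ v ∈ dpVerts Q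

/-- An almost-disjoint 2-path decomposition of the digraph with arc set `A`: a partition of
`A` into directed 2-paths, no two of which are in conflict. -/
def IsDDecomp (A : Set (V × V)) (X : Set (Finset (V × V))) : Prop :=
  (∀ P ∈ X, IsDTwoPath P) ∧
  (∀ p : V × V, p ∈ A ↔ ∃ P ∈ X, p ∈ P) ∧
  (∀ P ∈ X, ∀ Q ∈ X, P ≠ Q → ∀ p ∈ P, p ∉ Q) ∧
  (∀ P ∈ X, ∀ Q ∈ X, P ≠ Q → ¬ DConflict P Q)

end Digraph

namespace Digraph

variable {V : Type*} [DecidableEq V]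

/-- The vertex set of an arc set. -/
def arcVerts (A : Set (V × V)) : Set V := {v | ∃ p ∈ A, v = p.1 ∨ v = p.2}

/-- `IsSP A s t`: the digraph with arc set `A` is a (simple) series-parallel digraph with
source `s` and sink `t`: it is a single arc, or arises from two smaller SP-digraphs on
otherwise disjoint vertex sets by a series or a parallel composition. -/
inductive IsSP : Set (V × V) → V → V → Prop
  | single {s t : V} (h : s ≠ t) : IsSP {(s, t)} s t
  | series {A₁ A₂ : Set (V × V)} {s m t : V} :
      IsSP A₁ s m → IsSP A₂ m t → arcVerts A₁ ∩ arcVerts A₂ = {m} →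
      Disjoint A₁ A₂ → IsSP (A₁ ∪ A₂) s t
  | parallel {A₁ A₂ : Set (V × V)} {s t : V} :
      IsSP A₁ s t → IsSP A₂ s t → arcVerts A₁ ∩ arcVerts A₂ = {s, t} →
      Disjoint A₁ A₂ → IsSP (A₁ ∪ A₂) s t

/-- `P` is a directed 2-path from `u` to `v`. -/
def IsUVPath (P : Finset (V × V)) (u v : V) : Prop := ∃ w : V, P = {(u, w), (w, v)}

/-- `S`, `T` and `X` witness that `(a,b,c)` is a feasible configuration for the digraph with
arc set `A`, source `s` and sink `t`:  `S` consists of out-arcs of `s`, `T` of in-arcs of `t`,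
`X` is an almost-disjoint 2-path decomposition of `A` minus `S ∪ T` with (i) `a = |S|`,
`b = |T|`; (ii) for no arc `(u,v) ∈ S ∪ T` there is a `u`-`v` path in `X`; (iii) `A` contains
the arc `(s,t)` iff `c = 1`, in which case `(s,t) ∈ S ∩ T`; (iv) `X` contains an `s`-`t` path
of length 2 iff `c = 2`. -/
def Witnesses (A : Set (V × V)) (s t : V) (a b c : ℕ)
    (S T : Set (V × V)) (X : Set (Finset (V × V))) : Prop :=
  c ≤ 2 ∧
  S ⊆ {p ∈ A | p.1 = s} ∧ T ⊆ {p ∈ A | p.2 = t} ∧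
  IsDDecomp (A \ (S ∪ T)) X ∧
  S.ncard = a ∧ T.ncard = b ∧
  (∀ p ∈ S ∪ T, ¬ ∃ P ∈ X, IsUVPath P p.1 p.2) ∧
  ((s, t) ∈ A ↔ c = 1) ∧
  (c = 1 → (s, t) ∈ S ∩ T) ∧
  ((∃ P ∈ X, IsUVPath P s t) ↔ c = 2)

/-- `(a,b,c)` is a `D`-feasible configuration for the digraph with arc set `A`, source `s`
and sink `t`. -/
def DFeasible (A : Set (V × V)) (s t : V) (a b c : ℕ) : Prop :=
  ∃ S T X, Witnesses A s t a b c S T X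

end Digraph


namespace Digraph

variable {V : Type*} [DecidableEq V]

lemma arcVerts_union (A B : Set (V × V)) :
    arcVerts (A ∪ B) = arcVerts A ∪ arcVerts B := by
  ext v
  simp only [arcVerts, Set.mem_setOf_eq, Set.mem_union]
  constructor
  · rintro ⟨p, hp | hp, h⟩
    exacts [Or.inl ⟨p, hp, h⟩, Or.inr ⟨p, hp, h⟩]
  · rintro (⟨p, hp, h⟩ | ⟨p, hp, h⟩)
    exacts [⟨p, Or.inl hp, h⟩, ⟨p, Or.inr hp, h⟩]

lemma sp_props {A : Set (V × V)} {s t : V} (h : IsSP A s t) :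
    A.Finite ∧ s ∈ arcVerts A ∧ t ∈ arcVerts A ∧
    (∀ p ∈ A, p.2 ≠ s ∧ p.1 ≠ t) ∧ s ≠ t := by
  induction h with
  | @single s t hst =>
    refine ⟨Set.finite_singleton _, ⟨(s, t), rfl, Or.inl rfl⟩,
      ⟨(s, t), rfl, Or.inr rfl⟩, ?_, hst⟩
    intro p hp
    rw [Set.mem_singleton_iff] at hp
    subst hp
    exact ⟨fun h => hst h.symm, hst⟩
  | @series A₁ A₂ s m t h1 h2 hint hdis ih1 ih2 =>
    obtain ⟨f1, hs1, hm1, ha1, hsm⟩ := ih1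
    obtain ⟨f2, hm2, ht2, ha2, hmt⟩ := ih2
    have hst : s ≠ t := by
      intro h
      subst h
      have hm : s ∈ ({m} : Set V) := hint ▸ ⟨hs1, ht2⟩
      exact hsm hm
    refine ⟨f1.union f2, ?_, ?_, ?_, hst⟩
    · rw [arcVerts_union]; exact Or.inl hs1
    · rw [arcVerts_union]; exact Or.inr ht2
    · rintro p (hp | hp)
      · refine ⟨(ha1 p hp).1, fun h => ?_⟩
        have ht : t ∈ ({m} : Set V) := hint ▸ ⟨⟨p, hp, Or.inl h.symm⟩, ht2⟩
        exact hmt ht.symm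
      · refine ⟨fun h => ?_, (ha2 p hp).2⟩
        have hs : s ∈ ({m} : Set V) := hint ▸ ⟨hs1, ⟨p, hp, Or.inr h.symm⟩⟩
        exact hsm hs
  | @parallel A₁ A₂ s t h1 h2 hint hdis ih1 ih2 =>
    obtain ⟨f1, hs1, ht1, ha1, hst⟩ := ih1
    obtain ⟨f2, hs2, ht2, ha2, _⟩ := ih2
    refine ⟨f1.union f2, ?_, ?_, ?_, hst⟩
    · rw [arcVerts_union]; exact Or.inl hs1
    · rw [arcVerts_union]; exact Or.inl ht1
    · rintro p (hp | hp)
      exacts [ha1 p hp, ha2 p hp]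

lemma no_cross {A₁ A₂ : Set (V × V)} {s t x y z : V}
    (h₁ : IsSP A₁ s t) (h₂ : IsSP A₂ s t)
    (hv : arcVerts A₁ ∩ arcVerts A₂ = {s, t})
    (ha : (x, y) ∈ A₁) (hb : (y, z) ∈ A₂) : False := by
  have p1 := (sp_props h₁).2.2.2.1
  have p2 := (sp_props h₂).2.2.2.1
  have hy : y ∈ ({s, t} : Set V) :=
    hv ▸ ⟨⟨(x, y), ha, Or.inr rfl⟩, ⟨(y, z), hb, Or.inl rfl⟩⟩
  rcases hy with rfl | rfl
  · exact (p1 (x, y) ha).1 rfl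
  · exact (p2 (y, z) hb).2 rfl

lemma sides {A₁ A₂ : Set (V × V)} {s t : V}
    (h₁ : IsSP A₁ s t) (h₂ : IsSP A₂ s t)
    (hv : arcVerts A₁ ∩ arcVerts A₂ = {s, t})
    {S T : Set (V × V)} {X : Set (Finset (V × V))}
    (hX : IsDDecomp ((A₁ ∪ A₂) \ (S ∪ T)) X) :
    ∀ P ∈ X, (∀ p ∈ P, p ∈ A₁) ∨ (∀ p ∈ P, p ∈ A₂) := by
  intro P hP
  obtain ⟨x, y, z, hxy, hyz, hxz, rfl⟩ := hX.1 P hP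
  have hmem : ∀ p ∈ ({(x, y), (y, z)} : Finset (V × V)), p ∈ A₁ ∪ A₂ := fun p hp =>
    ((hX.2.1 p).2 ⟨_, hP, hp⟩).1
  have key : ∀ p ∈ ({(x, y), (y, z)} : Finset (V × V)), p = (x, y) ∨ p = (y, z) := by
    intro p hp
    simpa using hp
  have h1 : (x, y) ∈ A₁ ∪ A₂ := hmem _ (by simp)
  have h2 : (y, z) ∈ A₁ ∪ A₂ := hmem _ (by simp)
  have hv' : arcVerts A₂ ∩ arcVerts A₁ = {s, t} := by rwa [Set.inter_comm] at hv
  rcases h1 with h1 | h1 <;> rcases h2 with h2 | h2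
  · left; intro p hp; rcases key p hp with rfl | rfl <;> assumption
  · exact absurd (no_cross h₁ h₂ hv h1 h2) (fun h => h)
  · exact absurd (no_cross h₂ h₁ hv' h1 h2) (fun h => h)
  · right; intro p hp; rcases key p hp with rfl | rfl <;> assumption

open Classical in
lemma side_witness {A₁ A₂ : Set (V × V)} {s t : V}
    (h₁ : IsSP A₁ s t) (h₂ : IsSP A₂ s t)
    (hv : arcVerts A₁ ∩ arcVerts A₂ = {s, t}) (hd : Disjoint A₁ A₂)
    {a b c : ℕ} {S T : Set (V × V)} {X : Set (Finset (V × V))}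
    (hw : Witnesses (A₁ ∪ A₂) s t a b c S T X) :
    Witnesses A₁ s t (S ∩ A₁).ncard (T ∩ A₁).ncard
      (if ∃ P ∈ {P ∈ X | ∃ p ∈ P, (p : V × V) ∈ A₁}, IsUVPath P s t then 2
       else if (s, t) ∈ A₁ then 1 else 0)
      (S ∩ A₁) (T ∩ A₁) {P ∈ X | ∃ p ∈ P, (p : V × V) ∈ A₁} := by
  obtain ⟨hc2, hS, hT, hX, ha, hb, hpath, hst1, hst2, hst3⟩ := hw
  have hsub : {P ∈ X | ∃ p ∈ P, (p : V × V) ∈ A₁} ⊆ X := fun P hP => hP.1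
  have hside := sides h₁ h₂ hv hX
  have hX₁mem : ∀ P ∈ {P ∈ X | ∃ p ∈ P, (p : V × V) ∈ A₁}, ∀ p ∈ P, p ∈ A₁ := by
    intro P hP p hp
    rcases hside P hP.1 with h | h
    · exact h p hp
    · obtain ⟨q, hq, hq1⟩ := hP.2
      exact absurd (h q hq) (fun h2 => Set.disjoint_left.mp hd hq1 h2)
  have hdiff : A₁ \ (S ∩ A₁ ∪ T ∩ A₁) = A₁ \ (S ∪ T) := by
    ext p
    simp only [Set.mem_diff, Set.mem_union, Set.mem_inter_iff]
    tauto
  have h8 : (s, t) ∈ A₁ ↔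
      (if ∃ P ∈ {P ∈ X | ∃ p ∈ P, (p : V × V) ∈ A₁}, IsUVPath P s t then 2
       else if (s, t) ∈ A₁ then 1 else 0) = 1 := by
    constructor
    · intro h
      have hc : c = 1 := hst1.1 (Or.inl h)
      have hno : ¬ ∃ P ∈ {P ∈ X | ∃ p ∈ P, (p : V × V) ∈ A₁}, IsUVPath P s t := by
        rintro ⟨P, hP, hp⟩
        have := hst3.1 ⟨P, hsub hP, hp⟩
        omega
      rw [if_neg hno, if_pos h]
    · intro h
      split_ifs at h with hA hB
      · omega
      · exact hB
  refine ⟨?_, ?_, ?_, ?_, rfl, rfl, ?_, h8, ?_, ?_⟩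
  · split_ifs <;> omega
  · intro p hp
    exact ⟨hp.2, (hS hp.1).2⟩
  · intro p hp
    exact ⟨hp.2, (hT hp.1).2⟩
  · refine ⟨fun P hP => hX.1 P (hsub hP), ?_,
      fun P hP Q hQ hne => hX.2.2.1 P (hsub hP) Q (hsub hQ) hne,
      fun P hP Q hQ hne => hX.2.2.2 P (hsub hP) Q (hsub hQ) hne⟩
    intro p
    rw [hdiff]
    constructor
    · intro hp
      obtain ⟨P, hP, hpP⟩ := (hX.2.1 p).1 ⟨Or.inl hp.1, hp.2⟩
      exact ⟨P, ⟨hP, p, hpP, hp.1⟩, hpP⟩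
    · rintro ⟨P, hP, hpP⟩
      have h' := (hX.2.1 p).2 ⟨P, hP.1, hpP⟩
      exact ⟨hX₁mem P hP p hpP, h'.2⟩
  · rintro p hp ⟨P, hP, hp'⟩
    refine hpath p ?_ ⟨P, hsub hP, hp'⟩
    rcases hp with hp | hp
    exacts [Or.inl hp.1, Or.inr hp.1]
  · intro h
    have hA : (s, t) ∈ A₁ := h8.2 h
    have hc : c = 1 := hst1.1 (Or.inl hA)
    have hST := hst2 hc
    exact ⟨⟨hST.1, hA⟩, ⟨hST.2, hA⟩⟩
  · constructor
    · intro h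
      rw [if_pos h]
    · intro h
      split_ifs at h with hA hB
      · exact hA
      · omega

lemma combine {p₁ q₁ p₂ q₂ : Prop} {c c₁ c₂ : ℕ} (hc : c ≤ 2) (h₁ : c₁ ≤ 2) (h₂ : c₂ ≤ 2)
    (e₁ : p₁ ↔ c₁ = 1) (f₁ : q₁ ↔ c₁ = 2) (e₂ : p₂ ↔ c₂ = 1) (f₂ : q₂ ↔ c₂ = 2)
    (e : p₁ ∨ p₂ ↔ c = 1) (f : q₁ ∨ q₂ ↔ c = 2)
    (hnp : ¬(p₁ ∧ p₂)) (hnq : ¬(q₁ ∧ q₂)) :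
    c = max c₁ c₂ ∧ (c₁ = 0 ∨ c₂ = 0) := by
  rw [e₁, e₂] at e hnp
  rw [f₁, f₂] at f hnq
  omega

end Digraph

open Digraph

/-- Necessity for parallel composition: every feasible configuration `(a,b,c)` of a simple
parallel composition splits into feasible configurations of the two parts with
`a = a1 + a2`, `b = b1 + b2`, `c = max c1 c2` and `c1 = 0` or `c2 = 0`. -/
theorem stmt14 {V : Type*} [DecidableEq V] (A₁ A₂ : Set (V × V)) (s t : V)
    (h₁ : IsSP A₁ s t) (h₂ : IsSP A₂ s t)
    (hv : arcVerts A₁ ∩ arcVerts A₂ = {s, t}) (hd : Disjoint A₁ A₂)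
    (a b c : ℕ) (hf : DFeasible (A₁ ∪ A₂) s t a b c) :
    ∃ a₁ b₁ c₁ a₂ b₂ c₂ : ℕ,
      DFeasible A₁ s t a₁ b₁ c₁ ∧ DFeasible A₂ s t a₂ b₂ c₂ ∧
      a = a₁ + a₂ ∧ b = b₁ + b₂ ∧ c = max c₁ c₂ ∧ (c₁ = 0 ∨ c₂ = 0) := by
  classical
  obtain ⟨S, T, X, hw⟩ := hf
  have hv' : arcVerts A₂ ∩ arcVerts A₁ = {s, t} := by rwa [Set.inter_comm] at hv
  have hw' : Witnesses (A₂ ∪ A₁) s t a b c S T X := by rwa [Set.union_comm] at hw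
  have w1 := side_witness h₁ h₂ hv hd hw
  have w2 := side_witness h₂ h₁ hv' hd.symm hw'
  obtain ⟨hc2, hS, hT, hX, ha, hb, hpath, hst1, hst2, hst3⟩ := id hw
  obtain ⟨hle1, -, -, -, -, -, -, h8a, -, h10a⟩ := id w1
  obtain ⟨hle2, -, -, -, -, -, -, h8b, -, h10b⟩ := id w2
  have hside := sides h₁ h₂ hv hX
  have hst : s ≠ t := (sp_props h₁).2.2.2.2
  -- membership facts about X₁ and X₂
  have hX₁mem : ∀ P ∈ {P ∈ X | ∃ p ∈ P, (p : V × V) ∈ A₁}, ∀ p ∈ P, p ∈ A₁ := by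
    intro P hP p hp
    rcases hside P hP.1 with h | h
    · exact h p hp
    · obtain ⟨q, hq, hq1⟩ := hP.2
      exact absurd (h q hq) (fun h2 => Set.disjoint_left.mp hd hq1 h2)
  have hX₂mem : ∀ P ∈ {P ∈ X | ∃ p ∈ P, (p : V × V) ∈ A₂}, ∀ p ∈ P, p ∈ A₂ := by
    intro P hP p hp
    rcases hside P hP.1 with h | h
    · obtain ⟨q, hq, hq1⟩ := hP.2
      exact absurd (h q hq) (fun h2 => Set.disjoint_left.mp hd h2 hq1)
    · exact h p hp
  -- the combine hypotheses
  have e : (s, t) ∈ A₁ ∨ (s, t) ∈ A₂ ↔ c = 1 := by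
    rw [← hst1]; rfl
  have f : (∃ P ∈ {P ∈ X | ∃ p ∈ P, (p : V × V) ∈ A₁}, IsUVPath P s t) ∨
      (∃ P ∈ {P ∈ X | ∃ p ∈ P, (p : V × V) ∈ A₂}, IsUVPath P s t) ↔ c = 2 := by
    constructor
    · rintro (⟨P, hP, hp⟩ | ⟨P, hP, hp⟩) <;> exact hst3.1 ⟨P, hP.1, hp⟩
    · intro hc
      obtain ⟨P, hP, w, hPeq⟩ := hst3.2 hc
      have hsw : (s, w) ∈ P := by rw [hPeq]; exact Finset.mem_insert_self _ _
      rcases hside P hP with h | h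
      · exact Or.inl ⟨P, ⟨hP, (s, w), hsw, h _ hsw⟩, ⟨w, hPeq⟩⟩
      · exact Or.inr ⟨P, ⟨hP, (s, w), hsw, h _ hsw⟩, ⟨w, hPeq⟩⟩
  have hnp : ¬((s, t) ∈ A₁ ∧ (s, t) ∈ A₂) := fun h =>
    Set.disjoint_left.mp hd h.1 h.2
  have hnq : ¬((∃ P ∈ {P ∈ X | ∃ p ∈ P, (p : V × V) ∈ A₁}, IsUVPath P s t) ∧
      (∃ P ∈ {P ∈ X | ∃ p ∈ P, (p : V × V) ∈ A₂}, IsUVPath P s t)) := by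
    rintro ⟨⟨P, hP, wP, hPeq⟩, ⟨Q, hQ, wQ, hQeq⟩⟩
    have hsP : (s, wP) ∈ P := by rw [hPeq]; exact Finset.mem_insert_self _ _
    have hne : P ≠ Q := by
      intro h
      subst h
      exact Set.disjoint_left.mp hd (hX₁mem P hP _ hsP) (hX₂mem P hQ _ hsP)
    refine hX.2.2.2 P hP.1 Q hQ.1 hne ⟨s, t, hst, ?_, ?_, ?_, ?_⟩
    · exact ⟨(s, wP), by rw [hPeq]; exact Finset.mem_insert_self _ _, Or.inl rfl⟩
    · exact ⟨(s, wQ), by rw [hQeq]; exact Finset.mem_insert_self _ _, Or.inl rfl⟩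
    · exact ⟨(wP, t), by rw [hPeq]; simp, Or.inr rfl⟩
    · exact ⟨(wQ, t), by rw [hQeq]; simp, Or.inr rfl⟩
  have hcomb := combine hc2 hle1 hle2 h8a h10a h8b h10b e f hnp hnq
  -- cardinality splitting
  have hfin1 : A₁.Finite := (sp_props h₁).1
  have hfin2 : A₂.Finite := (sp_props h₂).1
  have hSsplit : ∀ (U : Set (V × V)), U ⊆ A₁ ∪ A₂ →
      U.ncard = (U ∩ A₁).ncard + (U ∩ A₂).ncard := by
    intro U hU
    have hUeq : U = (U ∩ A₁) ∪ (U ∩ A₂) := by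
      rw [← Set.inter_union_distrib_left, Set.inter_eq_left.2 hU]
    have hdisj : Disjoint (U ∩ A₁) (U ∩ A₂) :=
      hd.mono Set.inter_subset_right Set.inter_subset_right
    calc U.ncard = ((U ∩ A₁) ∪ (U ∩ A₂)).ncard := by rw [← hUeq]
      _ = (U ∩ A₁).ncard + (U ∩ A₂).ncard :=
        Set.ncard_union_eq hdisj (hfin1.inter_of_right U) (hfin2.inter_of_right U)
  refine ⟨(S ∩ A₁).ncard, (T ∩ A₁).ncard, _, (S ∩ A₂).ncard, (T ∩ A₂).ncard, _,
    ⟨_, _, _, w1⟩, ⟨_, _, _, w2⟩, ?_, ?_, hcomb.1, hcomb.2⟩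
  · rw [← ha]
    exact hSsplit S (fun p hp => (hS hp).1)
  · rw [← hb]
    exact hSsplit T (fun p hp => (hT hp).1)
end

section
/- Let D be obtained by series composition of simple SP-digraphs D1 (source s1, sink t1) and D2 (source s2, sink t2), identifying t1 with s2, with D simple, and suppose neither D1 nor D2 contains an arc from its source to its sink. If (a1,b1,c1) is D1-feasible and (a2,b2,c2) is D2-feasible with b1 = a2, then (a1, b2, 0) is a D-feasible configuration. -/
namespace Digraph

variable {V : Type*} [DecidableEq V]

omit [DecidableEq V] in
lemma mem_arcVerts_fst {A : Set (V × V)} {p : V × V} (hp : p ∈ A) : p.1 ∈ arcVerts A :=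
  ⟨p, hp, Or.inl rfl⟩

omit [DecidableEq V] in
lemma mem_arcVerts_snd {A : Set (V × V)} {p : V × V} (hp : p ∈ A) : p.2 ∈ arcVerts A :=
  ⟨p, hp, Or.inr rfl⟩

omit [DecidableEq V] in
lemma IsSP.finite {A : Set (V × V)} {s t : V} (h : IsSP A s t) : A.Finite := by
  induction h with
  | single h => exact Set.finite_singleton _
  | series _ _ _ _ ih1 ih2 => exact ih1.union ih2
  | parallel _ _ _ _ ih1 ih2 => exact ih1.union ih2

omit [DecidableEq V] in
lemma IsSP.source_mem {A : Set (V × V)} {s t : V} (h : IsSP A s t) : s ∈ arcVerts A := by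
  induction h with
  | single h => exact ⟨_, rfl, Or.inl rfl⟩
  | series _ _ _ _ ih1 _ => exact ⟨ih1.choose, Or.inl ih1.choose_spec.1, ih1.choose_spec.2⟩
  | parallel _ _ _ _ ih1 _ => exact ⟨ih1.choose, Or.inl ih1.choose_spec.1, ih1.choose_spec.2⟩

omit [DecidableEq V] in
lemma IsSP.sink_mem {A : Set (V × V)} {s t : V} (h : IsSP A s t) : t ∈ arcVerts A := by
  induction h with
  | single h => exact ⟨_, rfl, Or.inr rfl⟩
  | series _ _ _ _ _ ih2 => exact ⟨ih2.choose, Or.inr ih2.choose_spec.1, ih2.choose_spec.2⟩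
  | parallel _ _ _ _ _ ih2 => exact ⟨ih2.choose, Or.inr ih2.choose_spec.1, ih2.choose_spec.2⟩

omit [DecidableEq V] in
lemma IsSP.source_ne_sink {A : Set (V × V)} {s t : V} (h : IsSP A s t) : s ≠ t := by
  induction h with
  | single h => exact h
  | @series A₁ A₂ s m t h1 h2 hv hd ih1 ih2 =>
      intro hst
      have : s ∈ arcVerts A₁ ∩ arcVerts A₂ := ⟨h1.source_mem, hst ▸ h2.sink_mem⟩
      rw [hv] at this
      exact ih1 this
  | parallel _ _ _ _ ih1 _ => exact ih1

omit [DecidableEq V] in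
lemma IsSP.no_loop {A : Set (V × V)} {s t : V} (h : IsSP A s t) :
    ∀ p ∈ A, p.1 ≠ p.2 := by
  induction h with
  | single h => rintro p rfl; exact h
  | series _ _ _ _ ih1 ih2 => rintro p (hp | hp); exacts [ih1 p hp, ih2 p hp]
  | parallel _ _ _ _ ih1 ih2 => rintro p (hp | hp); exacts [ih1 p hp, ih2 p hp]

omit [DecidableEq V] in
lemma IsSP.sink_no_out {A : Set (V × V)} {s t : V} (h : IsSP A s t) :
    ∀ p ∈ A, p.1 ≠ t := by
  induction h with
  | single h => rintro p rfl; exact h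
  | @series A₁ A₂ s m t h1 h2 hv hd ih1 ih2 =>
      rintro p (hp | hp)
      · intro hpt
        have : t ∈ arcVerts A₁ ∩ arcVerts A₂ := ⟨hpt ▸ mem_arcVerts_fst hp, h2.sink_mem⟩
        rw [hv] at this
        exact ih1 p hp (hpt.trans this)
      · exact ih2 p hp
  | @parallel A₁ A₂ s t h1 h2 hv hd ih1 ih2 =>
      rintro p (hp | hp); exacts [ih1 p hp, ih2 p hp]

omit [DecidableEq V] in
lemma IsSP.source_no_in {A : Set (V × V)} {s t : V} (h : IsSP A s t) :
    ∀ p ∈ A, p.2 ≠ s := by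
  induction h with
  | single h => rintro p rfl; exact h.symm
  | @series A₁ A₂ s m t h1 h2 hv hd ih1 ih2 =>
      rintro p (hp | hp)
      · exact ih1 p hp
      · intro hps
        have : s ∈ arcVerts A₁ ∩ arcVerts A₂ := ⟨h1.source_mem, hps ▸ mem_arcVerts_snd hp⟩
        rw [hv] at this
        exact ih2 p hp (hps.trans this)
  | @parallel A₁ A₂ s t h1 h2 hv hd ih1 ih2 =>
      rintro p (hp | hp); exacts [ih1 p hp, ih2 p hp]

lemma dpVerts_pair {P : Finset (V × V)} {a b c d : V}
    (h : P = {(a, b), (c, d)}) {v : V} (hv : v ∈ dpVerts P) :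
    v = a ∨ v = b ∨ v = c ∨ v = d := by
  subst h
  obtain ⟨p, hp, hv⟩ := hv
  simp only [Finset.mem_insert, Finset.mem_singleton] at hp
  rcases hp with rfl | rfl <;> rcases hv with rfl | rfl <;> tauto

end Digraph


open Digraph

/-- Sufficiency for series composition without source-to-sink arcs: if `(a1,b1,c1)` is
feasible for `D1` and `(a2,b2,c2)` for `D2` with `b1 = a2`, then `(a1, b2, 0)` is feasible
for the series composition. -/
theorem stmt17 {V : Type*} [DecidableEq V] (A₁ A₂ : Set (V × V)) (s m t : V)
    (h₁ : IsSP A₁ s m) (h₂ : IsSP A₂ m t)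
    (hv : arcVerts A₁ ∩ arcVerts A₂ = {m}) (hd : Disjoint A₁ A₂)
    (hna₁ : (s, m) ∉ A₁) (hna₂ : (m, t) ∉ A₂)
    (a₁ b₁ c₁ a₂ b₂ c₂ : ℕ)
    (hf₁ : DFeasible A₁ s m a₁ b₁ c₁) (hf₂ : DFeasible A₂ m t a₂ b₂ c₂)
    (hba : b₁ = a₂) :
    DFeasible (A₁ ∪ A₂) s t a₁ b₂ 0 := by
  classical
  obtain ⟨S₁, T₁, X₁, -, hS₁, hT₁, ⟨hX₁p, hX₁c, hX₁d, hX₁f⟩, hSc₁, hTc₁, hpp₁, -, -, -⟩ := hf₁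
  obtain ⟨S₂, T₂, X₂, -, hS₂, hT₂, ⟨hX₂p, hX₂c, hX₂d, hX₂f⟩, hSc₂, hTc₂, hpp₂, -, -, -⟩ := hf₂
  have hsm : s ≠ m := h₁.source_ne_sink
  have hmt : m ≠ t := h₂.source_ne_sink
  have hmem : ∀ v, v ∈ arcVerts A₁ → v ∈ arcVerts A₂ → v = m := by
    intro v hv1 hv2
    have : v ∈ ({m} : Set V) := hv ▸ ⟨hv1, hv2⟩
    exact this
  have hsA₂ : s ∉ arcVerts A₂ := fun h => hsm (hmem s h₁.source_mem h)
  have htA₁ : t ∉ arcVerts A₁ := fun h => hmt (hmem t h h₂.sink_mem).symm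
  have hdisj : ∀ p : V × V, p ∈ A₁ → p ∈ A₂ → False :=
    fun p h1 h2 => Set.disjoint_left.mp hd h1 h2
  have hT₁A : T₁ ⊆ A₁ := fun p hp => (hT₁ hp).1
  have hS₂A : S₂ ⊆ A₂ := fun p hp => (hS₂ hp).1
  have hS₁A : S₁ ⊆ A₁ := fun p hp => (hS₁ hp).1
  have hT₂A : T₂ ⊆ A₂ := fun p hp => (hT₂ hp).1
  -- the pairing between `T₁` and `S₂`
  have hT₁fin : T₁.Finite := h₁.finite.subset hT₁A
  have hS₂fin : S₂.Finite := h₂.finite.subset hS₂A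
  haveI := hT₁fin.to_subtype
  haveI := hS₂fin.to_subtype
  have hcardeq : Nat.card T₁ = Nat.card S₂ := by
    rw [Nat.card_coe_set_eq, Nat.card_coe_set_eq, hTc₁, hSc₂, hba]
  obtain ⟨e⟩ := Finite.card_eq.mp hcardeq
  set g : T₁ → Finset (V × V) := fun q => {(q : V × V), ((e q : V × V))} with hg
  have hqA₁ : ∀ q : T₁, (q : V × V) ∈ A₁ := fun q => hT₁A q.2
  have heA₂ : ∀ q : T₁, (e q : V × V) ∈ A₂ := fun q => hS₂A (e q).2
  have hq2 : ∀ q : T₁, (q : V × V).2 = m := fun q => (hT₁ q.2).2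
  have heq1 : ∀ q : T₁, (e q : V × V).1 = m := fun q => (hS₂ (e q).2).2
  have hg_mem : ∀ (q : T₁) (p : V × V), p ∈ g q ↔ p = (q : V × V) ∨ p = (e q : V × V) :=
    fun q p => by simp only [hg, Finset.mem_insert, Finset.mem_singleton]
  have hgStruct : ∀ q : T₁, ∃ u w : V, (q : V × V) = (u, m) ∧ (e q : V × V) = (m, w) ∧
      g q = {(u, m), (m, w)} ∧ u ≠ m ∧ m ≠ w ∧ u ≠ w ∧
      (u, m) ∈ T₁ ∧ (m, w) ∈ S₂ ∧ (u, m) ∈ A₁ ∧ (m, w) ∈ A₂ := by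
    intro q
    obtain ⟨u, hu⟩ : ∃ u, (q : V × V) = (u, m) :=
      ⟨(q : V × V).1, Prod.ext rfl (hq2 q)⟩
    obtain ⟨w, hw⟩ : ∃ w, (e q : V × V) = (m, w) :=
      ⟨(e q : V × V).2, Prod.ext (heq1 q) rfl⟩
    have huA : (u, m) ∈ A₁ := hu ▸ hqA₁ q
    have hwA : (m, w) ∈ A₂ := hw ▸ heA₂ q
    have hum : u ≠ m := h₁.no_loop _ huA
    have hmw : m ≠ w := h₂.no_loop _ hwA
    have huw : u ≠ w := fun h =>
      hum (hmem u (mem_arcVerts_fst huA) (h ▸ mem_arcVerts_snd hwA))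
    refine ⟨u, w, hu, hw, ?_, hum, hmw, huw, hu ▸ q.2, hw ▸ (e q).2, huA, hwA⟩
    simp only [hg]
    rw [hu, hw]
  -- arcs of the old decompositions
  have hX₁arc : ∀ P ∈ X₁, ∀ p ∈ P, p ∈ A₁ \ (S₁ ∪ T₁) :=
    fun P hP p hp => (hX₁c p).2 ⟨P, hP, hp⟩
  have hX₂arc : ∀ P ∈ X₂, ∀ p ∈ P, p ∈ A₂ \ (S₂ ∪ T₂) :=
    fun P hP p hp => (hX₂c p).2 ⟨P, hP, hp⟩
  have hX₁V : ∀ P ∈ X₁, ∀ v ∈ dpVerts P, v ∈ arcVerts A₁ := by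
    rintro P hP v ⟨p, hp, hv⟩
    rcases hv with rfl | rfl
    exacts [mem_arcVerts_fst (hX₁arc P hP p hp).1, mem_arcVerts_snd (hX₁arc P hP p hp).1]
  have hX₂V : ∀ P ∈ X₂, ∀ v ∈ dpVerts P, v ∈ arcVerts A₂ := by
    rintro P hP v ⟨p, hp, hv⟩
    rcases hv with rfl | rfl
    exacts [mem_arcVerts_fst (hX₂arc P hP p hp).1, mem_arcVerts_snd (hX₂arc P hP p hp).1]
  set XX : Set (Finset (V × V)) := X₁ ∪ X₂ ∪ Set.range g with hXX
  have hXcases : ∀ P ∈ XX, P ∈ X₁ ∨ P ∈ X₂ ∨ ∃ q, P = g q := by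
    rintro P ((h | h) | ⟨q, rfl⟩)
    exacts [Or.inl h, Or.inr (Or.inl h), Or.inr (Or.inr ⟨q, rfl⟩)]
  -- conflict helpers
  have dsymm : ∀ P Q : Finset (V × V), DConflict P Q → DConflict Q P :=
    fun P Q ⟨u, v, h1, h2, h3, h4, h5⟩ => ⟨u, v, h1, h3, h2, h5, h4⟩
  have keyXX : ∀ P ∈ X₁, ∀ Q ∈ X₂, ¬ DConflict P Q := by
    rintro P hP Q hQ ⟨x, y, hxy, hxP, hxQ, hyP, hyQ⟩
    have hx := hmem x (hX₁V P hP x hxP) (hX₂V Q hQ x hxQ)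
    have hy := hmem y (hX₁V P hP y hyP) (hX₂V Q hQ y hyQ)
    exact hxy (hx.trans hy.symm)
  have keyY₁ : ∀ P ∈ X₁, ∀ q : T₁, ¬ DConflict P (g q) := by
    intro P hP q hC
    obtain ⟨u, w, hqe, hee, hgq, hum, hmw, huw, huT, hwS, huA, hwA⟩ := hgStruct q
    obtain ⟨x, y, hxy, hxP, hxQ, hyP, hyQ⟩ := hC
    have hxA : x ∈ arcVerts A₁ := hX₁V P hP x hxP
    have hyA : y ∈ arcVerts A₁ := hX₁V P hP y hyP
    have hwn : w ∉ arcVerts A₁ := fun h => hmw (hmem w h (mem_arcVerts_snd hwA)).symm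
    have hx' : x = u ∨ x = m := by
      rcases dpVerts_pair hgq hxQ with h | h | h | h
      exacts [Or.inl h, Or.inr h, Or.inr h, absurd (h ▸ hxA) hwn]
    have hy' : y = u ∨ y = m := by
      rcases dpVerts_pair hgq hyQ with h | h | h | h
      exacts [Or.inl h, Or.inr h, Or.inr h, absurd (h ▸ hyA) hwn]
    have hkey : u ∈ dpVerts P ∧ m ∈ dpVerts P := by
      rcases hx' with rfl | rfl <;> rcases hy' with rfl | rfl
      · exact absurd rfl hxy
      · exact ⟨hxP, hyP⟩
      · exact ⟨hyP, hxP⟩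
      · exact absurd rfl hxy
    obtain ⟨α, β, γ, hαβ, hβγ, hαγ, hPeq⟩ := hX₁p P hP
    have hm1 : ((α, β) : V × V) ∈ A₁ \ (S₁ ∪ T₁) :=
      hX₁arc P hP _ (by rw [hPeq]; exact Finset.mem_insert_self _ _)
    have hm2 : ((β, γ) : V × V) ∈ A₁ \ (S₁ ∪ T₁) :=
      hX₁arc P hP _ (by rw [hPeq]; simp)
    have hmγ : m = γ := by
      obtain ⟨p, hp, hvm⟩ := hkey.2
      rw [hPeq] at hp
      simp only [Finset.mem_insert, Finset.mem_singleton] at hp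
      rcases hp with rfl | rfl <;> rcases hvm with h | h
      · exact absurd h.symm (h₁.sink_no_out _ hm1.1)
      · exact absurd h.symm (h₁.sink_no_out _ hm2.1)
      · exact absurd h.symm (h₁.sink_no_out _ hm2.1)
      · exact h
    obtain ⟨p, hp, hvu⟩ := hkey.1
    rw [hPeq] at hp
    simp only [Finset.mem_insert, Finset.mem_singleton] at hp
    rcases hp with rfl | rfl <;> rcases hvu with h | h
    · -- u = α
      have h' : u = α := h
      refine hpp₁ (u, m) (Or.inr huT) ⟨P, hP, β, ?_⟩
      show P = {(u, β), (β, m)}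
      rw [hPeq, h', hmγ]
    · -- u = β (p = (α,β))
      have h' : u = β := h
      have hβm : ((β, γ) : V × V) ∈ T₁ := by rw [← h', ← hmγ]; exact huT
      exact hm2.2 (Or.inr hβm)
    · -- u = β (p = (β,γ))
      have h' : u = β := h
      have hβm : ((β, γ) : V × V) ∈ T₁ := by rw [← h', ← hmγ]; exact huT
      exact hm2.2 (Or.inr hβm)
    · -- u = γ = m
      have h' : u = γ := h
      exact hum (h'.trans hmγ.symm)
  have keyY₂ : ∀ P ∈ X₂, ∀ q : T₁, ¬ DConflict P (g q) := by
    intro P hP q hC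
    obtain ⟨u, w, hqe, hee, hgq, hum, hmw, huw, huT, hwS, huA, hwA⟩ := hgStruct q
    obtain ⟨x, y, hxy, hxP, hxQ, hyP, hyQ⟩ := hC
    have hxA : x ∈ arcVerts A₂ := hX₂V P hP x hxP
    have hyA : y ∈ arcVerts A₂ := hX₂V P hP y hyP
    have hun : u ∉ arcVerts A₂ := fun h => hum (hmem u (mem_arcVerts_fst huA) h)
    have hx' : x = m ∨ x = w := by
      rcases dpVerts_pair hgq hxQ with h | h | h | h
      exacts [absurd (h ▸ hxA) hun, Or.inl h, Or.inl h, Or.inr h]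
    have hy' : y = m ∨ y = w := by
      rcases dpVerts_pair hgq hyQ with h | h | h | h
      exacts [absurd (h ▸ hyA) hun, Or.inl h, Or.inl h, Or.inr h]
    have hkey : w ∈ dpVerts P ∧ m ∈ dpVerts P := by
      rcases hx' with rfl | rfl <;> rcases hy' with rfl | rfl
      · exact absurd rfl hxy
      · exact ⟨hyP, hxP⟩
      · exact ⟨hxP, hyP⟩
      · exact absurd rfl hxy
    obtain ⟨α, β, γ, hαβ, hβγ, hαγ, hPeq⟩ := hX₂p P hP
    have hm1 : ((α, β) : V × V) ∈ A₂ \ (S₂ ∪ T₂) :=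
      hX₂arc P hP _ (by rw [hPeq]; exact Finset.mem_insert_self _ _)
    have hm2 : ((β, γ) : V × V) ∈ A₂ \ (S₂ ∪ T₂) :=
      hX₂arc P hP _ (by rw [hPeq]; simp)
    have hmα : m = α := by
      obtain ⟨p, hp, hvm⟩ := hkey.2
      rw [hPeq] at hp
      simp only [Finset.mem_insert, Finset.mem_singleton] at hp
      rcases hp with rfl | rfl <;> rcases hvm with h | h
      · exact h
      · exact absurd h.symm (h₂.source_no_in _ hm1.1)
      · exact absurd h.symm (h₂.source_no_in _ hm1.1)
      · exact absurd h.symm (h₂.source_no_in _ hm2.1)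
    obtain ⟨p, hp, hvw⟩ := hkey.1
    rw [hPeq] at hp
    simp only [Finset.mem_insert, Finset.mem_singleton] at hp
    rcases hp with rfl | rfl <;> rcases hvw with h | h
    · -- w = α = m
      have h' : w = α := h
      exact hmw (hmα.trans h'.symm)
    · -- w = β (p = (α,β)): arc (α,β) = (m,w) ∈ S₂
      have h' : w = β := h
      have : ((α, β) : V × V) ∈ S₂ := by rw [← hmα, ← h']; exact hwS
      exact hm1.2 (Or.inl this)
    · -- w = β (p = (β,γ))
      have h' : w = β := h
      have : ((α, β) : V × V) ∈ S₂ := by rw [← hmα, ← h']; exact hwS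
      exact hm1.2 (Or.inl this)
    · -- w = γ: P is an m-w path
      have h' : w = γ := h
      refine hpp₂ (m, w) (Or.inl hwS) ⟨P, hP, β, ?_⟩
      show P = {(m, β), (β, w)}
      rw [hPeq, hmα, h']
  have hYY : ∀ q q' : T₁, q ≠ q' → ∀ x, x ∈ dpVerts (g q) → x ∈ dpVerts (g q') → x = m := by
    intro q q' hqq x hx hx'
    obtain ⟨u, w, hqe, hee, hgq, hum, hmw, huw, huT, hwS, huA, hwA⟩ := hgStruct q
    obtain ⟨u', w', hqe', hee', hgq', hum', hmw', huw', huT', hwS', huA', hwA'⟩ := hgStruct q'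
    have huu : u ≠ u' := by
      intro h
      have hcc : (q : V × V) = (q' : V × V) := by rw [hqe, hqe', h]
      exact hqq (Subtype.coe_injective hcc)
    have hww : w ≠ w' := by
      intro h
      have hcc : (e q : V × V) = (e q' : V × V) := by rw [hee, hee', h]
      exact hqq (e.injective (Subtype.coe_injective hcc))
    have huw₂ : u ≠ w' := fun h =>
      hum (hmem u (mem_arcVerts_fst huA) (by rw [h]; exact mem_arcVerts_snd hwA'))
    have hwu₂ : w ≠ u' := fun h =>
      hmw (hmem w (by rw [h]; exact mem_arcVerts_fst huA') (mem_arcVerts_snd hwA)).symm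
    rcases dpVerts_pair hgq hx with rfl | rfl | rfl | rfl <;>
        rcases dpVerts_pair hgq' hx' with h | h | h | h <;>
      first
        | rfl
        | exact h
        | exact absurd h huu
        | exact absurd h huw₂
        | exact absurd h hwu₂
        | exact absurd h hww
  -- assembling the decomposition
  have hXpaths : ∀ P ∈ XX, IsDTwoPath P := by
    intro P hP
    rcases hXcases P hP with h | h | ⟨q, rfl⟩
    · exact hX₁p P h
    · exact hX₂p P h
    · obtain ⟨u, w, hqe, hee, hgq, hum, hmw, huw, huT, hwS, huA, hwA⟩ := hgStruct q
      exact ⟨u, m, w, hum, hmw, huw, hgq⟩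
  have hXc : ∀ p : V × V, p ∈ (A₁ ∪ A₂) \ (S₁ ∪ T₂) ↔ ∃ P ∈ XX, p ∈ P := by
    intro p
    constructor
    · rintro ⟨hpA, hpST⟩
      rcases hpA with hp1 | hp2
      · by_cases hpT : p ∈ T₁
        · exact ⟨g ⟨p, hpT⟩, Set.mem_union_right _ ⟨⟨p, hpT⟩, rfl⟩,
            (hg_mem _ p).2 (Or.inl rfl)⟩
        · obtain ⟨P, hP, hpP⟩ :=
            (hX₁c p).1 ⟨hp1, fun h => h.elim (fun h' => hpST (Or.inl h')) hpT⟩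
          exact ⟨P, Set.mem_union_left _ (Set.mem_union_left _ hP), hpP⟩
      · by_cases hpS : p ∈ S₂
        · refine ⟨g (e.symm ⟨p, hpS⟩), Set.mem_union_right _ ⟨_, rfl⟩,
            (hg_mem _ p).2 (Or.inr ?_)⟩
          rw [e.apply_symm_apply]
        · obtain ⟨P, hP, hpP⟩ :=
            (hX₂c p).1 ⟨hp2, fun h => h.elim hpS (fun h' => hpST (Or.inr h'))⟩
          exact ⟨P, Set.mem_union_left _ (Set.mem_union_right _ hP), hpP⟩
    · rintro ⟨P, hP, hpP⟩
      rcases hXcases P hP with hP1 | hP2 | ⟨q, rfl⟩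
      · have h := hX₁arc P hP1 p hpP
        exact ⟨Or.inl h.1,
          fun hc => hc.elim (fun h' => h.2 (Or.inl h')) (fun h' => hdisj p h.1 (hT₂A h'))⟩
      · have h := hX₂arc P hP2 p hpP
        exact ⟨Or.inr h.1,
          fun hc => hc.elim (fun h' => hdisj p (hS₁A h') h.1) (fun h' => h.2 (Or.inr h'))⟩
      · obtain ⟨u, w, hqe, hee, hgq, hum, hmw, huw, huT, hwS, huA, hwA⟩ := hgStruct q
        rcases (hg_mem q p).1 hpP with rfl | rfl
        · refine ⟨Or.inl (hqA₁ q), ?_⟩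
          rintro (h | h)
          · have hsu : s = u := ((hS₁ h).2).symm.trans (Prod.ext_iff.mp hqe).1
            exact hna₁ (by rw [hsu]; exact huA)
          · exact hdisj _ (hqA₁ q) (hT₂A h)
        · refine ⟨Or.inr (heA₂ q), ?_⟩
          rintro (h | h)
          · exact hdisj _ (hS₁A h) (heA₂ q)
          · have htw : t = w := ((hT₂ h).2).symm.trans (Prod.ext_iff.mp hee).2
            exact hna₂ (by rw [htw]; exact hwA)
  have hXd : ∀ P ∈ XX, ∀ Q ∈ XX, P ≠ Q → ∀ p ∈ P, p ∉ Q := by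
    intro P hP Q hQ hne p hpP hpQ
    rcases hXcases P hP with hP1 | hP2 | ⟨q, rfl⟩ <;>
      rcases hXcases Q hQ with hQ1 | hQ2 | ⟨q', rfl⟩
    · exact hX₁d P hP1 Q hQ1 hne p hpP hpQ
    · exact hdisj p (hX₁arc P hP1 p hpP).1 (hX₂arc Q hQ2 p hpQ).1
    · rcases (hg_mem q' p).1 hpQ with rfl | rfl
      · exact (hX₁arc P hP1 _ hpP).2 (Or.inr q'.2)
      · exact hdisj _ (hX₁arc P hP1 _ hpP).1 (heA₂ q')
    · exact hdisj p (hX₁arc Q hQ1 p hpQ).1 (hX₂arc P hP2 p hpP).1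
    · exact hX₂d P hP2 Q hQ2 hne p hpP hpQ
    · rcases (hg_mem q' p).1 hpQ with rfl | rfl
      · exact hdisj _ (hqA₁ q') (hX₂arc P hP2 _ hpP).1
      · exact (hX₂arc P hP2 _ hpP).2 (Or.inl (e q').2)
    · rcases (hg_mem q p).1 hpP with rfl | rfl
      · exact (hX₁arc Q hQ1 _ hpQ).2 (Or.inr q.2)
      · exact hdisj _ (hX₁arc Q hQ1 _ hpQ).1 (heA₂ q)
    · rcases (hg_mem q p).1 hpP with rfl | rfl
      · exact hdisj _ (hqA₁ q) (hX₂arc Q hQ2 _ hpQ).1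
      · exact (hX₂arc Q hQ2 _ hpQ).2 (Or.inl (e q).2)
    · have hqq : q ≠ q' := fun h => hne (congrArg g h)
      rcases (hg_mem q p).1 hpP with rfl | rfl <;> rcases (hg_mem q' _).1 hpQ with h | h
      · exact hqq (Subtype.coe_injective h)
      · exact hdisj _ (hqA₁ q) (by rw [h]; exact heA₂ q')
      · exact hdisj _ (by rw [h]; exact hqA₁ q') (heA₂ q)
      · exact hqq (e.injective (Subtype.coe_injective h))
  have hXf : ∀ P ∈ XX, ∀ Q ∈ XX, P ≠ Q → ¬ DConflict P Q := by
    intro P hP Q hQ hne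
    rcases hXcases P hP with hP1 | hP2 | ⟨q, rfl⟩ <;>
      rcases hXcases Q hQ with hQ1 | hQ2 | ⟨q', rfl⟩
    · exact hX₁f P hP1 Q hQ1 hne
    · exact keyXX P hP1 Q hQ2
    · exact keyY₁ P hP1 q'
    · exact fun hC => keyXX Q hQ1 P hP2 (dsymm _ _ hC)
    · exact hX₂f P hP2 Q hQ2 hne
    · exact keyY₂ P hP2 q'
    · exact fun hC => keyY₁ Q hQ1 q (dsymm _ _ hC)
    · exact fun hC => keyY₂ Q hQ2 q (dsymm _ _ hC)
    · rintro ⟨x, y, hxy, hxP, hxQ, hyP, hyQ⟩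
      have hqq : q ≠ q' := fun h => hne (congrArg g h)
      exact hxy ((hYY q q' hqq x hxP hxQ).trans (hYY q q' hqq y hyP hyQ).symm)
  -- condition (ii)
  have hppX : ∀ p ∈ S₁ ∪ T₂, ¬ ∃ P ∈ XX, IsUVPath P p.1 p.2 := by
    rintro p hp ⟨P, hP, w', hPeq⟩
    have harc1 : (p.1, w') ∈ P := by rw [hPeq]; exact Finset.mem_insert_self _ _
    have harc2 : (w', p.2) ∈ P := by rw [hPeq]; simp
    rcases hXcases P hP with hP1 | hP2 | ⟨q, rfl⟩
    · rcases hp with hpS | hpT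
      · exact hpp₁ p (Or.inl hpS) ⟨P, hP1, w', hPeq⟩
      · have hmm : p.2 ∈ arcVerts A₁ := mem_arcVerts_snd (p := (w', p.2)) (hX₁arc P hP1 _ harc2).1
        rw [(hT₂ hpT).2] at hmm
        exact htA₁ hmm
    · rcases hp with hpS | hpT
      · have hmm : p.1 ∈ arcVerts A₂ := mem_arcVerts_fst (p := (p.1, w')) (hX₂arc P hP2 _ harc1).1
        rw [(hS₁ hpS).2] at hmm
        exact hsA₂ hmm
      · exact hpp₂ p (Or.inr hpT) ⟨P, hP2, w', hPeq⟩
    · obtain ⟨u, w, hqe, hee, hgq, hum, hmw, huw, huT, hwS, huA, hwA⟩ := hgStruct q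
      rw [hgq] at harc1 harc2
      simp only [Finset.mem_insert, Finset.mem_singleton] at harc1 harc2
      rcases hp with hpS | hpT
      · have hps : p.1 = s := (hS₁ hpS).2
        rcases harc1 with h | h
        · have h1 : p.1 = u := (Prod.ext_iff.mp h).1
          have hsu : s = u := hps.symm.trans h1
          exact hna₁ (by rw [hsu]; exact huA)
        · exact hsm (hps.symm.trans (Prod.ext_iff.mp h).1)
      · have hpt : p.2 = t := (hT₂ hpT).2
        rcases harc2 with h | h
        · exact hmt ((Prod.ext_iff.mp h).2.symm.trans hpt)
        · have h2 : t = w := hpt.symm.trans (Prod.ext_iff.mp h).2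
          exact hna₂ (by rw [h2]; exact hwA)
  have hstna : (s, t) ∉ A₁ ∪ A₂ := by
    rintro (h | h)
    · exact htA₁ (mem_arcVerts_snd h)
    · exact hsA₂ (mem_arcVerts_fst h)
  have hno : ¬ ∃ P ∈ XX, IsUVPath P s t := by
    rintro ⟨P, hP, w', hPeq⟩
    have harc1 : ((s, w') : V × V) ∈ P := by rw [hPeq]; exact Finset.mem_insert_self _ _
    have harc2 : ((w', t) : V × V) ∈ P := by rw [hPeq]; simp
    rcases hXcases P hP with hP1 | hP2 | ⟨q, rfl⟩
    · exact htA₁ (mem_arcVerts_snd (hX₁arc P hP1 _ harc2).1)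
    · exact hsA₂ (mem_arcVerts_fst (hX₂arc P hP2 _ harc1).1)
    · obtain ⟨u, w, hqe, hee, hgq, hum, hmw, huw, huT, hwS, huA, hwA⟩ := hgStruct q
      rw [hgq] at harc1 harc2
      simp only [Finset.mem_insert, Finset.mem_singleton] at harc1 harc2
      rcases harc1 with h | h
      · rcases harc2 with h2 | h2
        · exact hmt (Prod.ext_iff.mp h2).2.symm
        · have h3 : t = w := (Prod.ext_iff.mp h2).2
          exact hna₂ (by rw [h3]; exact hwA)
      · exact hsm (Prod.ext_iff.mp h).1
  exact ⟨S₁, T₂, XX,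
    by norm_num,
    fun p hp => ⟨Or.inl (hS₁ hp).1, (hS₁ hp).2⟩,
    fun p hp => ⟨Or.inr (hT₂ hp).1, (hT₂ hp).2⟩,
    ⟨hXpaths, hXc, hXd, hXf⟩, hSc₁, hTc₂, hppX,
    iff_of_false hstna (by norm_num),
    fun h => absurd h (by norm_num),
    iff_of_false hno (by norm_num)⟩
end
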